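/- arXiv:math/0303187 — 4 statements merged into one kernel-verified Lean document; each statement's English description precedes it below -/
import Mathlib

section
/- Let H be a nonnegatively graded ring, finitely generated over a field k = H^0 by elements of positive degree, and let M be a finitely generated graded H-module of depth d. If ζ_1, …, ζ_r is a filter-regular sequence for M (i.e., for each i the multiplication map ζ_{i+1} on M/(ζ_1,…,ζ_i) has kernel of finite length, and M/(ζ_1,…,ζ_r) has finite length), then ζ_1, …, ζ_d is a regular sequence on M. -/
/-!
Over the Noetherian ring `A`, whether `M ⧸ (x₁, …, xᵢ)M` has a nonzero element killed by `𝔪` is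
the same for all `M`-regular sequences `x₁, …, xᵢ` in `𝔪`: exchange the last entries for a common
regular element `w`, move `w` to the front and induct on `i`. An initial segment of a regular
sequence of length `d > i` shows that no such element exists. Now let `ζ₁, …, ζᵢ` be regular with
`i < d` and suppose `ζᵢ₊₁` is a zero divisor on the graded module `M ⧸ (ζ₁, …, ζᵢ)M`.
Filter-regularity bounds the degrees of the homogeneous witnesses of this, and a witness of top
degree is killed by every element of positive degree, hence by `𝔪`: a contradiction. Finally,
`(ζ₁, …, ζ_d)M ≠ M` by the graded Nakayama lemma.
-/

open RingTheory.Sequence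

section RegularSequenceModulo

variable {R M : Type*} [CommRing R] [AddCommGroup M] [Module R M]

/-- `M ⧸ S` has a nonzero element killed by `I`. -/
def QuotHasSocle (I : Ideal R) (S : Submodule R M) : Prop :=
  ∃ m ∉ S, ∀ a ∈ I, a • m ∈ S

/-- `rs` is a weakly regular sequence on `M ⧸ S`, phrased inside `M`. -/
def IsWeaklyRegularMod (S : Submodule R M) (rs : List R) : Prop :=
  ∀ i (h : i < rs.length), IsSMulRegular (M ⧸ (S ⊔ Ideal.ofList (rs.take i) • ⊤)) rs[i]

theorem isWeaklyRegularMod_bot_iff {rs : List R} :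
    IsWeaklyRegularMod (⊥ : Submodule R M) rs ↔ IsWeaklyRegular M rs := by
  rw [isWeaklyRegular_iff]
  refine forall_congr' fun i => forall_congr' fun _ => ?_
  rw [bot_sup_eq]

theorem sup_ofList_append_singleton_smul_top (S : Submodule R M) (rs : List R) (r : R) :
    S ⊔ Ideal.ofList (rs ++ [r]) • ⊤ = (S ⊔ Ideal.ofList rs • ⊤) ⊔ Ideal.span {r} • ⊤ := by
  rw [Ideal.ofList_append, Submodule.sup_smul, ← sup_assoc, Ideal.ofList_singleton]

theorem isWeaklyRegularMod_append_singleton_iff {S : Submodule R M} {rs : List R} {r : R} :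
    IsWeaklyRegularMod S (rs ++ [r]) ↔
      IsWeaklyRegularMod S rs ∧ IsSMulRegular (M ⧸ (S ⊔ Ideal.ofList rs • ⊤)) r := by
  constructor
  · intro h
    refine ⟨fun i hi => ?_, ?_⟩
    · have := h i (by simp; omega)
      rwa [List.take_append_of_le_length hi.le, List.getElem_append_left hi] at this
    · have := h rs.length (by simp)
      rwa [List.take_left, List.getElem_concat_length rfl] at this
  · rintro ⟨h, hr⟩ i hi
    rcases Nat.lt_or_ge i rs.length with hi' | hi'
    · rw [List.take_append_of_le_length hi'.le, List.getElem_append_left hi']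
      exact h i hi'
    · obtain rfl : i = rs.length := by simp at hi; omega
      rwa [List.take_left, List.getElem_concat_length rfl]

theorem mem_sup_span_singleton_smul_top {S : Submodule R M} {x : R} {m : M} :
    m ∈ S ⊔ Ideal.span {x} • (⊤ : Submodule R M) ↔ ∃ s ∈ S, ∃ u : M, m = s + x • u := by
  simp only [Submodule.mem_sup, Submodule.ideal_span_singleton_smul,
    Submodule.mem_smul_pointwise_iff_exists, Submodule.mem_top, true_and]
  constructor
  · rintro ⟨s, hs, _, ⟨u, rfl⟩, rfl⟩
    exact ⟨s, hs, u, rfl⟩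
  · rintro ⟨s, hs, u, rfl⟩
    exact ⟨s, hs, _, ⟨u, rfl⟩, rfl⟩

theorem smul_mem_sup_span_singleton_smul_top (S : Submodule R M) (x : R) (u : M) :
    x • u ∈ S ⊔ Ideal.span {x} • (⊤ : Submodule R M) :=
  mem_sup_span_singleton_smul_top.mpr ⟨0, S.zero_mem, u, (zero_add _).symm⟩

theorem isSMulRegular_quotient_sup_swap {S : Submodule R M} {a b : R}
    (ha : IsSMulRegular (M ⧸ S) a)
    (hb : IsSMulRegular (M ⧸ (S ⊔ Ideal.span {a} • ⊤)) b) :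
    IsSMulRegular (M ⧸ (S ⊔ Ideal.span {b} • ⊤)) a := by
  rw [isSMulRegular_quotient_iff_mem_of_smul_mem] at ha hb ⊢
  intro m hm
  obtain ⟨s, hs, m', ham⟩ := mem_sup_span_singleton_smul_top.mp hm
  have hbm' : b • m' ∈ S ⊔ Ideal.span {a} • ⊤ := by
    rw [show b • m' = a • m - s by rw [ham]; abel]
    exact sub_mem (smul_mem_sup_span_singleton_smul_top S a m) (Submodule.mem_sup_left hs)
  obtain ⟨s', hs', u, rfl⟩ := mem_sup_span_singleton_smul_top.mp (hb m' hbm')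
  have hmu : m - b • u ∈ S := ha _ <| by
    rw [show a • (m - b • u) = s + b • s' by rw [smul_sub, ham]; module]
    exact S.add_mem hs (S.smul_mem b hs')
  rw [← sub_add_cancel m (b • u)]
  exact add_mem (Submodule.mem_sup_left hmu) (smul_mem_sup_span_singleton_smul_top S b u)

theorem IsWeaklyRegularMod.sup_span_singleton_smul_top {S : Submodule R M} {rs : List R} {w : R}
    (hrs : IsWeaklyRegularMod S rs)
    (hw : ∀ j ≤ rs.length, IsSMulRegular (M ⧸ (S ⊔ Ideal.ofList (rs.take j) • ⊤)) w) :
    IsWeaklyRegularMod (S ⊔ Ideal.span {w} • ⊤) rs := by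
  intro i hi
  have hw' := hw (i + 1) hi
  rw [List.take_succ_eq_append_getElem hi, sup_ofList_append_singleton_smul_top] at hw'
  rw [sup_right_comm]
  exact isSMulRegular_quotient_sup_swap (hrs i hi) hw'

/-- The witness `m` for `S ⊔ xM` is traded for the `m'` with `y • m ≡ x • m' [S]`; this realises
`Hom(R ⧸ I, M ⧸ (S ⊔ xM)) ≅ Ext¹(R ⧸ I, M ⧸ S) ≅ Hom(R ⧸ I, M ⧸ (S ⊔ yM))`. -/
theorem QuotHasSocle.exchange {I : Ideal R} {S : Submodule R M} {x y : R} (hyI : y ∈ I)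
    (hx : IsSMulRegular (M ⧸ S) x) (hy : IsSMulRegular (M ⧸ S) y)
    (h : QuotHasSocle I (S ⊔ Ideal.span {x} • ⊤)) : QuotHasSocle I (S ⊔ Ideal.span {y} • ⊤) := by
  rw [isSMulRegular_quotient_iff_mem_of_smul_mem] at hx hy
  obtain ⟨m, hmS, hmI⟩ := h
  obtain ⟨s, hs, m', hym⟩ := mem_sup_span_singleton_smul_top.mp (hmI y hyI)
  refine ⟨m', fun hm' => hmS ?_, fun a haI => ?_⟩
  · obtain ⟨s', hs', v, rfl⟩ := mem_sup_span_singleton_smul_top.mp hm'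
    have hmv : m - x • v ∈ S := hy _ <| by
      rw [show y • (m - x • v) = s + x • s' by rw [smul_sub, hym]; module]
      exact S.add_mem hs (S.smul_mem x hs')
    rw [← sub_add_cancel m (x • v)]
    exact add_mem (Submodule.mem_sup_left hmv) (smul_mem_sup_span_singleton_smul_top S x v)
  · obtain ⟨s₁, hs₁, u, ham⟩ := mem_sup_span_singleton_smul_top.mp (hmI a haI)
    have hau : a • m' - y • u ∈ S := hx _ <| by
      have : x • (a • m' - y • u) = y • s₁ - a • s := by
        calc x • (a • m' - y • u) = a • (x • m') - y • (x • u) := by module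
          _ = a • (y • m - s) - y • (a • m - s₁) := by rw [hym, ham]; module
          _ = y • s₁ - a • s := by module
      rw [this]
      exact S.sub_mem (S.smul_mem y hs₁) (S.smul_mem a hs)
    rw [← sub_add_cancel (a • m') (y • u)]
    exact add_mem (Submodule.mem_sup_left hau) (smul_mem_sup_span_singleton_smul_top S y u)

theorem not_quotHasSocle_of_isSMulRegular {I : Ideal R} {S : Submodule R M} {a : R} (haI : a ∈ I)
    (ha : IsSMulRegular (M ⧸ S) a) : ¬ QuotHasSocle I S := fun ⟨_, hmS, hmI⟩ =>
  hmS (mem_of_isSMulRegular_quotient_of_smul_mem ha (hmI a haI))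

theorem exists_mem_isSMulRegular_of_forall_smul_eq_zero [IsNoetherianRing R] [Module.Finite R M]
    (I : Ideal R) (h : ∀ m : M, (∀ a ∈ I, a • m = 0) → m = 0) :
    ∃ a ∈ I, IsSMulRegular M a := by
  have : Subsingleton (R ⧸ I →ₗ[R] M) := by
    refine ⟨fun f g => Submodule.linearMap_qext _ <| LinearMap.ext_ring <| sub_eq_zero.mp <|
      h _ fun a ha => ?_⟩
    have : a • I.mkQ 1 = 0 := by
      rw [← map_smul, smul_eq_mul, mul_one, Submodule.mkQ_apply]
      exact (Submodule.Quotient.mk_eq_zero _).mpr ha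
    rw [LinearMap.comp_apply, LinearMap.comp_apply, smul_sub, ← f.map_smul, ← g.map_smul, this,
      map_zero, map_zero, sub_zero]
  simpa [Ideal.annihilator_quotient] using IsSMulRegular.subsingleton_linearMap_iff.mp this

theorem exists_mem_forall_isSMulRegular_quotient [IsNoetherianRing R] [Module.Finite R M]
    {ι : Type*} [Finite ι] (I : Ideal R) (S : ι → Submodule R M)
    (h : ∀ j, ∃ a ∈ I, IsSMulRegular (M ⧸ S j) a) :
    ∃ a ∈ I, ∀ j, IsSMulRegular (M ⧸ S j) a := by
  classical
  obtain ⟨a, haI, ha⟩ := exists_mem_isSMulRegular_of_forall_smul_eq_zero (M := ∀ j, M ⧸ S j) I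
    fun m hm => funext fun j => by
      obtain ⟨b, hbI, hb⟩ := h j
      exact hb.right_eq_zero_of_smul (congrFun (hm b hbI) j)
  exact ⟨a, haI, fun j => ha.of_injective (LinearMap.single R (fun j => M ⧸ S j) j)
    (fun _ _ h => Pi.single_injective j h)⟩

theorem IsWeaklyRegularMod.exists_mem_forall_isSMulRegular [IsNoetherianRing R]
    [Module.Finite R M] {I : Ideal R} {S : Submodule R M} {xs ys : List R}
    (hxs : IsWeaklyRegularMod S xs) (hys : IsWeaklyRegularMod S ys)
    (hxI : ∀ x ∈ xs, x ∈ I) (hyI : ∀ y ∈ ys, y ∈ I) :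
    ∃ w ∈ I, (∀ j < xs.length, IsSMulRegular (M ⧸ (S ⊔ Ideal.ofList (xs.take j) • ⊤)) w) ∧
      ∀ j < ys.length, IsSMulRegular (M ⧸ (S ⊔ Ideal.ofList (ys.take j) • ⊤)) w := by
  obtain ⟨w, hwI, hw⟩ := exists_mem_forall_isSMulRegular_quotient I
    (Sum.elim (fun j : Fin xs.length => S ⊔ Ideal.ofList (xs.take j) • ⊤)
      (fun j : Fin ys.length => S ⊔ Ideal.ofList (ys.take j) • ⊤))
    (Sum.rec (fun j => ⟨_, hxI _ (List.getElem_mem j.2), hxs j j.2⟩)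
      (fun j => ⟨_, hyI _ (List.getElem_mem j.2), hys j j.2⟩))
  exact ⟨w, hwI, fun j hj => hw (.inl ⟨j, hj⟩), fun j hj => hw (.inr ⟨j, hj⟩)⟩

theorem quotHasSocle_iff_of_isWeaklyRegularMod [IsNoetherianRing R] [Module.Finite R M]
    {I : Ideal R} {S : Submodule R M} {xs ys : List R} (hlen : xs.length = ys.length)
    (hxI : ∀ x ∈ xs, x ∈ I) (hyI : ∀ y ∈ ys, y ∈ I)
    (hxs : IsWeaklyRegularMod S xs) (hys : IsWeaklyRegularMod S ys) :
    QuotHasSocle I (S ⊔ Ideal.ofList xs • ⊤) ↔ QuotHasSocle I (S ⊔ Ideal.ofList ys • ⊤) := by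
  induction xs using List.reverseRecOn generalizing S ys with
  | nil => rw [List.eq_nil_of_length_eq_zero hlen.symm]
  | append_singleton a x ih =>
    obtain ⟨b, y, rfl⟩ := (List.eq_nil_or_concat' ys).resolve_left (by rintro rfl; simp at hlen)
    obtain ⟨w, hwI, hwa, hwb⟩ := hxs.exists_mem_forall_isSMulRegular hys hxI hyI
    have hwa' : ∀ j ≤ a.length, IsSMulRegular (M ⧸ (S ⊔ Ideal.ofList (a.take j) • ⊤)) w :=
      fun j hj => List.take_append_of_le_length hj ▸ hwa j (by simp; omega)
    have hwb' : ∀ j ≤ b.length, IsSMulRegular (M ⧸ (S ⊔ Ideal.ofList (b.take j) • ⊤)) w :=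
      fun j hj => List.take_append_of_le_length hj ▸ hwb j (by simp; omega)
    simp only [List.mem_append, List.mem_singleton] at hxI hyI
    rw [isWeaklyRegularMod_append_singleton_iff] at hxs hys
    have hwa₁ := hwa' a.length le_rfl
    have hwb₁ := hwb' b.length le_rfl
    rw [List.take_length] at hwa₁ hwb₁
    rw [sup_ofList_append_singleton_smul_top, sup_ofList_append_singleton_smul_top]
    calc _ ↔ QuotHasSocle I ((S ⊔ Ideal.ofList a • ⊤) ⊔ Ideal.span {w} • ⊤) :=
          ⟨.exchange hwI hxs.2 hwa₁, .exchange (hxI x (.inr rfl)) hwa₁ hxs.2⟩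
      _ ↔ QuotHasSocle I ((S ⊔ Ideal.ofList b • ⊤) ⊔ Ideal.span {w} • ⊤) := by
          rw [sup_right_comm S (Ideal.ofList a • ⊤), sup_right_comm S (Ideal.ofList b • ⊤)]
          exact ih (by simpa using hlen) (fun z hz => hxI z (.inl hz)) (fun z hz => hyI z (.inl hz))
            (hxs.1.sup_span_singleton_smul_top hwa') (hys.1.sup_span_singleton_smul_top hwb')
      _ ↔ _ := ⟨.exchange (hyI y (.inr rfl)) hwb₁ hys.2, .exchange hwI hys.2 hwb₁⟩

theorem isWeaklyRegular_take_of_forall {rs : List R} {n : ℕ}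
    (h : ∀ i < n, ∀ hi : i < rs.length,
      IsSMulRegular (M ⧸ (Ideal.ofList (rs.take i) • ⊤ : Submodule R M)) rs[i]) :
    IsWeaklyRegular M (rs.take n) := by
  rw [isWeaklyRegular_iff]
  intro i hi
  simp only [List.length_take, lt_min_iff] at hi
  rw [List.take_take, min_eq_left hi.1.le, List.getElem_take]
  exact h i hi.1 hi.2

theorem isWeaklyRegular_take_of_isSMulRegular_or_quotHasSocle [IsNoetherianRing R]
    [Module.Finite R M] {I : Ideal R} {rs l : List R} (hrs : IsWeaklyRegular M rs)
    (hrsI : ∀ r ∈ rs, r ∈ I) (hlI : ∀ r ∈ l, r ∈ I)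
    (hl : ∀ i (hi : i < l.length),
      IsSMulRegular (M ⧸ (Ideal.ofList (l.take i) • ⊤ : Submodule R M)) l[i] ∨
        QuotHasSocle I (Ideal.ofList (l.take i) • ⊤ : Submodule R M)) :
    IsWeaklyRegular M (l.take rs.length) := by
  refine isWeaklyRegular_take_of_forall fun i hirs => ?_
  induction i using Nat.strong_induction_on with
  | _ i ih =>
  intro hil
  refine (hl i hil).resolve_right fun hsoc => ?_
  have hli := isWeaklyRegular_take_of_forall (M := M) fun j hji => ih j hji (by omega)
  have hrsi := isWeaklyRegular_take_of_forall (M := M) (n := i) fun j _ => hrs.regular_mod_prev j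
  rw [← isWeaklyRegularMod_bot_iff] at hli hrsi
  have hsoc' := (quotHasSocle_iff_of_isWeaklyRegularMod (by simp; omega)
    (fun r hr => hlI r (List.mem_of_mem_take hr)) (fun r hr => hrsI r (List.mem_of_mem_take hr))
    hli hrsi).mp (by rwa [bot_sup_eq])
  rw [bot_sup_eq] at hsoc'
  exact not_quotHasSocle_of_isSMulRegular (hrsI _ (List.getElem_mem hirs))
    (hrs.regular_mod_prev i hirs) hsoc'

end RegularSequenceModulo

section Graded

open DirectSum

variable {k A M : Type*} [CommRing k] [CommRing A] [Algebra k A] (𝒜 : ℤ → Submodule k A)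
  [AddCommGroup M] [Module k M] [Module A M] (ℳ : ℤ → Submodule k M) [Decomposition ℳ]
  [SetLike.GradedSMul 𝒜 ℳ]

theorem coe_decompose_smul_add_of_left_mem {a : A} {i : ℤ} (ha : a ∈ 𝒜 i) (m : M) (j : ℤ) :
    (decompose ℳ (a • m) (i + j) : M) = a • (decompose ℳ m j : M) := by
  induction m using Decomposition.inductionOn ℳ with
  | zero => simp
  | @homogeneous q m =>
    have ham : a • (m : M) ∈ ℳ (i + q) := SetLike.GradedSMul.smul_mem ha m.2
    by_cases hq : q = j
    · subst hq
      rw [decompose_of_mem_same ℳ ham, decompose_of_mem_same ℳ m.2]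
    · rw [decompose_of_mem_ne ℳ ham (by omega), decompose_of_mem_ne ℳ m.2 hq, smul_zero]
  | add m m' hm hm' => simp [smul_add, decompose_add, hm, hm']

theorem coe_decompose_smul_add_of_right_mem [GradedAlgebra 𝒜] (a : A) {m : M} {j : ℤ}
    (hm : m ∈ ℳ j) (i : ℤ) :
    (decompose ℳ (a • m) (i + j) : M) = (decompose 𝒜 a i : A) • m := by
  induction a using Decomposition.inductionOn 𝒜 with
  | zero => simp
  | @homogeneous p a =>
    have ham : (a : A) • m ∈ ℳ (p + j) := SetLike.GradedSMul.smul_mem a.2 hm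
    by_cases hp : p = i
    · subst hp
      rw [decompose_of_mem_same ℳ ham, decompose_of_mem_same 𝒜 a.2]
    · rw [decompose_of_mem_ne ℳ ham (by omega), decompose_of_mem_ne 𝒜 a.2 hp, zero_smul]
  | add a a' ha ha' => simp [add_smul, decompose_add, ha, ha']

open Pointwise in
theorem isHomogeneous_span_smul_top [GradedAlgebra 𝒜] {T : Set A}
    (hT : ∀ t ∈ T, ∃ p, t ∈ 𝒜 p) :
    (Ideal.span T • (⊤ : Submodule A M)).IsHomogeneous ℳ := by
  rw [← Submodule.span_univ, Submodule.span_smul_span]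
  intro j x hx
  induction hx using Submodule.span_induction generalizing j with
  | mem x hx =>
    obtain ⟨t, ht, m, -, rfl⟩ := hx
    obtain ⟨p, hp⟩ := hT t ht
    rw [← add_sub_cancel p j, coe_decompose_smul_add_of_left_mem 𝒜 ℳ hp]
    exact Submodule.subset_span ⟨t, ht, _, trivial, rfl⟩
  | zero => simp
  | add x y _ _ hx hy =>
    rw [decompose_add, DirectSum.add_apply, Submodule.coe_add]
    exact add_mem (hx j) (hy j)
  | smul c x _ hx =>
    induction c using Decomposition.inductionOn 𝒜 with
    | zero => simp
    | @homogeneous p c =>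
      rw [← add_sub_cancel p j, coe_decompose_smul_add_of_left_mem 𝒜 ℳ c.2]
      exact Submodule.smul_mem _ _ (hx _)
    | add c c' hc hc' =>
      rw [add_smul, decompose_add, DirectSum.add_apply, Submodule.coe_add]
      exact add_mem hc hc'

theorem isSMulRegular_or_quotHasSocle {S : Submodule A M} (hS : S.IsHomogeneous ℳ)
    {z : A} {n : ℤ} (hz : z ∈ 𝒜 n) {N : ℤ}
    (hN : ∀ deg, N ≤ deg → ∀ x ∈ ℳ deg, z • x ∈ S → x ∈ S) :
    IsSMulRegular (M ⧸ S) z ∨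
      QuotHasSocle (Ideal.span (⋃ p : {p : ℤ // 0 < p}, (𝒜 p.1 : Set A))) S := by
  rw [isSMulRegular_quotient_iff_mem_of_smul_mem, or_iff_not_imp_left]
  push Not
  rintro ⟨m, hzm, hmS⟩
  set P : ℤ → Prop := fun deg => ∃ x ∈ ℳ deg, z • x ∈ S ∧ x ∉ S
  have hP : ∃ deg, P deg := by
    obtain ⟨q, hq⟩ : ∃ q, (decompose ℳ m q : M) ∉ S := by
      by_contra! h
      exact hmS ((hS.mem_iff ℳ).mpr h)
    refine ⟨q, _, SetLike.coe_mem _, ?_, hq⟩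
    rw [← coe_decompose_smul_add_of_left_mem 𝒜 ℳ hz]
    exact hS _ hzm
  have hPbdd : ∃ b, ∀ deg, P deg → deg ≤ b := ⟨N, fun deg ⟨x, hx, hzx, hxS⟩ => by
    by_contra h
    exact hxS (hN deg (by omega) x hx hzx)⟩
  obtain ⟨d, ⟨x, hx, hzx, hxS⟩, hmax⟩ := Int.exists_greatest_of_bdd hPbdd hP
  -- for `t` of positive degree, `t • x` has larger degree, so it cannot be a witness
  refine ⟨x, hxS, fun a ha => Submodule.mem_colon_singleton.mp ?_⟩
  refine Ideal.span_le.mpr (fun t ht => ?_) ha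
  obtain ⟨⟨p, hp⟩, htp⟩ := Set.mem_iUnion.mp ht
  rw [SetLike.mem_coe, Submodule.mem_colon_singleton]
  by_contra htx
  have := hmax (p + d) ⟨t • x, SetLike.GradedSMul.smul_mem htp hx,
    by rw [smul_comm]; exact S.smul_mem t hzx, htx⟩
  omega

theorem coe_decompose_eq_zero_of_mem_span_pos [GradedAlgebra 𝒜] (hneg : ∀ n < 0, 𝒜 n = ⊥) {a : A}
    (ha : a ∈ Ideal.span (⋃ p : {p : ℤ // 0 < p}, (𝒜 p.1 : Set A))) {j : ℤ} (hj : j ≤ 0) :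
    (decompose 𝒜 a j : A) = 0 := by
  induction ha using Submodule.span_induction generalizing j with
  | mem t ht =>
    obtain ⟨⟨p, hp⟩, htp⟩ := Set.mem_iUnion.mp ht
    exact decompose_of_mem_ne 𝒜 htp (show p ≠ j by omega)
  | zero => simp
  | add x y _ _ hx hy => simp [decompose_add, hx hj, hy hj]
  | smul c x _ hx =>
    induction c using Decomposition.inductionOn 𝒜 with
    | zero => simp
    | @homogeneous q c =>
      rcases lt_or_ge q 0 with hq | hq
      · have : (c : A) = 0 := by simpa [hneg q hq] using c.2
        simp [this]
      · rw [smul_eq_mul, ← add_sub_cancel q j, coe_decompose_mul_add_of_left_mem 𝒜 c.2,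
          hx (by omega), mul_zero]
    | add c c' hc hc' =>
      rw [add_smul, decompose_add, DirectSum.add_apply, Submodule.coe_add, hc, hc', add_zero]

end Graded

open DirectSum in
theorem smul_top_ne_top_of_le_span_pos {k A M : Type*} [CommRing k] [CommRing A] [Algebra k A]
    (𝒜 : ℤ → Submodule k A) [GradedAlgebra 𝒜] [AddCommGroup M] [Module k M] [Module A M]
    [Module.Finite A M] [Nontrivial M] (ℳ : ℤ → Submodule k M) [Decomposition ℳ]
    [SetLike.GradedSMul 𝒜 ℳ] (hneg : ∀ n < 0, 𝒜 n = ⊥) {I : Ideal A}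
    (hI : I ≤ Ideal.span (⋃ p : {p : ℤ // 0 < p}, (𝒜 p.1 : Set A))) :
    I • (⊤ : Submodule A M) ≠ ⊤ := by
  intro h
  obtain ⟨r, hr, hrM⟩ := Submodule.exists_sub_one_mem_and_smul_eq_zero_of_fg_of_le_smul I ⊤
    Module.Finite.fg_top h.ge
  have hr₀ : (decompose 𝒜 r 0 : A) = 1 := by
    have := coe_decompose_eq_zero_of_mem_span_pos 𝒜 hneg (hI hr) le_rfl
    rwa [decompose_sub, DirectSum.sub_apply, AddSubgroupClass.coe_sub,
      decompose_of_mem_same 𝒜 SetLike.GradedOne.one_mem, sub_eq_zero] at this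
  obtain ⟨m, hm⟩ := exists_ne (0 : M)
  refine hm ((decompose ℳ).injective ?_)
  ext j
  -- `r` acts on each homogeneous component through its degree-`0` part, which is `1`.
  have := congrArg (fun x => (decompose ℳ x (0 + j) : M)) (hrM (decompose ℳ m j : M) trivial)
  simpa [coe_decompose_smul_add_of_right_mem 𝒜 ℳ r (SetLike.coe_mem _), hr₀] using this

theorem ofList_take_ofFn {R : Type*} [CommSemiring R] {r : ℕ} (ζ : Fin r → R) (i : ℕ) :
    Ideal.ofList ((List.ofFn ζ).take i) = Ideal.span (ζ '' {j | (j : ℕ) < i}) := by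
  refine congrArg Ideal.span (Set.ext fun x => ?_)
  simp only [Set.mem_ofPred_eq, List.mem_take_iff_getElem, List.getElem_ofFn, Set.mem_image,
    List.length_ofFn, lt_min_iff]
  constructor
  · rintro ⟨j, hj, rfl⟩
    exact ⟨⟨j, hj.2⟩, hj.1, rfl⟩
  · rintro ⟨j, hj, rfl⟩
    exact ⟨j, ⟨hj, j.2⟩, rfl⟩

theorem stmt0_general
    {k : Type} [Field k] {A : Type} [CommRing A] [Algebra k A]
    (𝒜 : ℤ → Submodule k A) [GradedAlgebra 𝒜]
    (hneg : ∀ n : ℤ, n < 0 → 𝒜 n = ⊥)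
    (hfgA : ∃ s : Finset A, (∀ a ∈ s, ∃ n : ℤ, 0 < n ∧ a ∈ 𝒜 n) ∧
      Algebra.adjoin k (s : Set A) = ⊤)
    {M : Type} [AddCommGroup M] [Module k M] [Module A M]
    [Module.Finite A M]
    (ℳ : ℤ → Submodule k M) [DirectSum.Decomposition ℳ]
    (hsmul : ∀ (i j : ℤ), ∀ a ∈ 𝒜 i, ∀ x ∈ ℳ j, a • x ∈ ℳ (i + j))
    (𝔪 : Ideal A)
    (h𝔪 : 𝔪 = Ideal.span (⋃ n : {n : ℤ // 0 < n}, ((𝒜 n.1 : Submodule k A) : Set A)))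
    -- `M` has depth exactly `d` with respect to `𝔪`:
    (d : ℕ)
    (hdepth₁ : ∃ rs : List A, rs.length = d ∧ (∀ a ∈ rs, a ∈ 𝔪) ∧ IsRegular M rs)
    -- the filter-regular sequence `ζ`, homogeneous of positive degrees `n i`:
    (r : ℕ) (ζ : Fin r → A) (n : Fin r → ℤ)
    (hζhom : ∀ i, ζ i ∈ 𝒜 (n i)) (hζpos : ∀ i, 0 < n i)
    (hfr : ∀ i : Fin r, ∃ N : ℤ, ∀ deg : ℤ, N ≤ deg → ∀ x ∈ ℳ deg,
      ζ i • x ∈ Ideal.span (ζ '' {j | j < i}) • (⊤ : Submodule A M) →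
      x ∈ Ideal.span (ζ '' {j | j < i}) • (⊤ : Submodule A M)) :
    IsRegular M ((List.ofFn ζ).take d) := by
  subst h𝔪
  have : SetLike.GradedSMul 𝒜 ℳ := ⟨fun _ _ _ _ ha hx => hsmul _ _ _ ha _ hx⟩
  obtain ⟨s, -, hs⟩ := hfgA
  have : Algebra.FiniteType k A := ⟨⟨s, hs⟩⟩
  have := Algebra.FiniteType.isNoetherianRing k A
  obtain ⟨rs, rfl, hrs𝔪, hrs⟩ := hdepth₁
  have := hrs.nontrivial
  have hζ𝔪 : ∀ a ∈ List.ofFn ζ, a ∈ Ideal.span (⋃ n : {n : ℤ // 0 < n}, (𝒜 n.1 : Set A)) := by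
    simp only [List.mem_ofFn]
    rintro _ ⟨i, rfl⟩
    exact Ideal.subset_span (Set.mem_iUnion.mpr ⟨⟨n i, hζpos i⟩, hζhom i⟩)
  refine ⟨isWeaklyRegular_take_of_isSMulRegular_or_quotHasSocle hrs.toIsWeaklyRegular hrs𝔪 hζ𝔪
    fun i hi => ?_, (smul_top_ne_top_of_le_span_pos 𝒜 ℳ hneg (Ideal.span_le.mpr
      fun a ha => hζ𝔪 a (List.mem_of_mem_take ha))).symm⟩
  have hir : i < r := by simpa using hi
  obtain ⟨N, hN⟩ := hfr ⟨i, hir⟩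
  rw [ofList_take_ofFn, List.getElem_ofFn]
  exact isSMulRegular_or_quotHasSocle 𝒜 ℳ
    (isHomogeneous_span_smul_top 𝒜 ℳ (by rintro _ ⟨j, -, rfl⟩; exact ⟨n j, hζhom j⟩)) (hζhom _) hN

/-- Let `A` be a nonnegatively graded ring, finitely generated over
a field `k = A⁰` by elements of positive degree, `𝔪` its irrelevant maximal ideal,
and `M` a finitely generated graded `A`-module of depth `d` (with respect to `𝔪`).
If `ζ₁, …, ζ_r` is a filter-regular sequence of homogeneous parameters for `M`
(each `ζ_{i+1}` is injective in all large degrees on `M/(ζ₁,…,ζᵢ)M`, and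
`M/(ζ₁,…,ζ_r)M` vanishes in large degrees), then `ζ₁, …, ζ_d` is a regular
sequence on `M`. -/
theorem stmt0
    {k : Type} [Field k] {A : Type} [CommRing A] [Algebra k A]
    (𝒜 : ℤ → Submodule k A) [GradedAlgebra 𝒜]
    (hconn : (𝒜 0 : Set A) = Set.range (algebraMap k A))
    (hneg : ∀ n : ℤ, n < 0 → 𝒜 n = ⊥)
    (hfgA : ∃ s : Finset A, (∀ a ∈ s, ∃ n : ℤ, 0 < n ∧ a ∈ 𝒜 n) ∧
      Algebra.adjoin k (s : Set A) = ⊤)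
    {M : Type} [AddCommGroup M] [Module k M] [Module A M] [IsScalarTower k A M]
    [Module.Finite A M] (hM : Nontrivial M)
    (ℳ : ℤ → Submodule k M) [DirectSum.Decomposition ℳ]
    (hsmul : ∀ (i j : ℤ), ∀ a ∈ 𝒜 i, ∀ x ∈ ℳ j, a • x ∈ ℳ (i + j))
    (𝔪 : Ideal A)
    (h𝔪 : 𝔪 = Ideal.span (⋃ n : {n : ℤ // 0 < n}, ((𝒜 n.1 : Submodule k A) : Set A)))
    -- `M` has depth exactly `d` with respect to `𝔪`:
    (d : ℕ)
    (hdepth₁ : ∃ rs : List A, rs.length = d ∧ (∀ a ∈ rs, a ∈ 𝔪) ∧ IsRegular M rs)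
    (hdepth₂ : ¬ ∃ rs : List A, rs.length = d + 1 ∧ (∀ a ∈ rs, a ∈ 𝔪) ∧ IsRegular M rs)
    -- the filter-regular sequence `ζ`, homogeneous of positive degrees `n i`:
    (r : ℕ) (ζ : Fin r → A) (n : Fin r → ℤ)
    (hζhom : ∀ i, ζ i ∈ 𝒜 (n i)) (hζpos : ∀ i, 0 < n i)
    (hfr : ∀ i : Fin r, ∃ N : ℤ, ∀ deg : ℤ, N ≤ deg → ∀ x ∈ ℳ deg,
      ζ i • x ∈ Ideal.span (ζ '' {j | j < i}) • (⊤ : Submodule A M) →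
      x ∈ Ideal.span (ζ '' {j | j < i}) • (⊤ : Submodule A M))
    (hfr' : ∃ N : ℤ, ∀ deg : ℤ, N ≤ deg → ∀ x ∈ ℳ deg,
      x ∈ Ideal.span (Set.range ζ) • (⊤ : Submodule A M)) :
    IsRegular M ((List.ofFn ζ).take d) :=
  stmt0_general 𝒜 hneg hfgA ℳ hsmul 𝔪 h𝔪 d hdepth₁ r ζ n hζhom hζpos hfr
end

section
/- Let V be an r-dimensional 𝔽_p-vector space, identified with the span of the variables in the polynomial ring 𝔽_p[x_1,…,x_r]. The i-th elementary symmetric polynomial e_i of the p^r elements of V is GL_r(𝔽_p)-invariant, and e_i = 0 unless i = 0 or i = p^r − p^{r−j} for some 1 ≤ j ≤ r. -/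
/-!
Let `V_r` be the `𝔽_p`-span of `v_1, …, v_r` in a commutative `𝔽_p`-algebra. The polynomial
`P_r(X) = ∏_{w ∈ V_r} (X + w)` is linearized: only the monomials `X ^ p ^ j` occur. Indeed,
a linearized polynomial `Q` is additive and `𝔽_p`-linear, so
`P_{r+1}(X) = ∏_{a ∈ 𝔽_p} Q(X + a v) = ∏_a (Q(X) + a Q(v)) = Q(X)^p - Q(v)^(p-1) Q(X)` with
`Q = P_r`, `v = v_{r+1}`, and the right-hand side is again linearized. Hence the coefficient
of `X ^ (p^r - i)` vanishes unless `p^r - i` is a power of `p`. Invariance holds because a linear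
substitution by `g ∈ GL_r(𝔽_p)` permutes `V`.
-/

namespace Polynomial

theorem homogenize_X_sub_C {R : Type*} [CommRing R] (a : R) :
    (X - C a).homogenize 1 = MvPolynomial.X 0 - MvPolynomial.C a * MvPolynomial.X 1 := by
  rw [← homogenizeLM_apply, map_sub, homogenizeLM_apply, homogenizeLM_apply,
    homogenize_X one_ne_zero, homogenize_C]
  simp

theorem homogenize_X_pow_sub_X {R : Type*} [CommRing R] {q : ℕ} (hq : q ≠ 0) :
    (X ^ q - X : R[X]).homogenize q =
      MvPolynomial.X 0 ^ q - MvPolynomial.X 0 * MvPolynomial.X 1 ^ (q - 1) := by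
  rw [← homogenizeLM_apply, map_sub, homogenizeLM_apply, homogenizeLM_apply, homogenize_X hq,
    homogenize_X_pow le_rfl]
  simp

section FiniteField

variable {K : Type*} [Field K] [Fintype K]

theorem _root_.FiniteField.prod_X_sub_C_eq_X_pow_card_sub_X :
    ∏ a : K, (X - C a) = (X ^ Fintype.card K - X : K[X]) := by
  have hq := Fintype.one_lt_card (α := K)
  have hroots := FiniteField.roots_X_pow_card_sub_X K
  have hmonic : (X ^ Fintype.card K - X : K[X]).Monic :=
    monic_X_pow_sub (by rw [degree_X]; exact_mod_cast hq)
  rw [← prod_multiset_X_sub_C_of_monic_of_roots_card_eq hmonic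
    (by rw [hroots, FiniteField.X_pow_card_sub_X_natDegree_eq K hq]; rfl), hroots]
  rfl

theorem _root_.FiniteField.prod_sub_smul {R : Type*} [CommRing R] [Algebra K R] (y t : R) :
    ∏ a : K, (y - a • t) = y ^ Fintype.card K - t ^ (Fintype.card K - 1) * y := by
  -- homogenize `∏ (X - a) = X ^ q - X` in degree `q = ∑ a, 1` and evaluate at `(y, t)`
  have key := congrArg (homogenize · (∑ _a : K, 1))
    (FiniteField.prod_X_sub_C_eq_X_pow_card_sub_X (K := K))
  rw [homogenize_finsetProd (p := fun a : K => X - C a) (n := fun _ => 1)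
    (fun a _ => (natDegree_X_sub_C a).le)] at key
  simp only [homogenize_X_sub_C, Finset.sum_const, Finset.card_univ, smul_eq_mul, mul_one,
    homogenize_X_pow_sub_X Fintype.card_ne_zero] at key
  simpa [Algebra.smul_def, mul_comm] using congrArg (MvPolynomial.aeval ![y, t]) key

theorem _root_.FiniteField.prod_add_smul {R : Type*} [CommRing R] [Algebra K R] (y t : R) :
    ∏ a : K, (y + a • t) = y ^ Fintype.card K - t ^ (Fintype.card K - 1) * y := by
  rw [← FiniteField.prod_sub_smul]
  exact Fintype.prod_equiv (Equiv.neg K) _ _ fun a => by simp [sub_eq_add_neg]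

end FiniteField

def IsLinearized (p : ℕ) {R : Type*} [Semiring R] (Q : R[X]) : Prop :=
  ∀ n, Q.coeff n ≠ 0 → ∃ j, n = p ^ j

section IsLinearized

variable {p : ℕ} {R : Type*} [CommRing R]

theorem isLinearized_X : IsLinearized p (X : R[X]) := by
  intro n hn
  refine ⟨0, ?_⟩
  by_contra h
  exact hn (coeff_X_of_ne_one (by simpa using h))

theorem IsLinearized.sub {P Q : R[X]} (hP : IsLinearized p P) (hQ : IsLinearized p Q) :
    IsLinearized p (P - Q) := by
  intro n hn
  by_cases hPn : P.coeff n = 0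
  · exact hQ n fun hQn => hn (by rw [coeff_sub, hPn, hQn, sub_zero])
  · exact hP n hPn

theorem IsLinearized.C_mul {Q : R[X]} (hQ : IsLinearized p Q) (c : R) :
    IsLinearized p (C c * Q) :=
  fun n hn => hQ n fun hQn => hn (by rw [coeff_C_mul, hQn, mul_zero])

theorem IsLinearized.eval_smul [Fact p.Prime] [Algebra (ZMod p) R] {Q : R[X]}
    (hQ : IsLinearized p Q) (a : ZMod p) (u : R) : Q.eval (a • u) = a • Q.eval u := by
  simp only [eval_eq_sum, sum_def, Finset.smul_sum]
  refine Finset.sum_congr rfl fun n hn => ?_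
  obtain ⟨j, rfl⟩ := hQ n (mem_support_iff.mp hn)
  rw [_root_.smul_pow, ZMod.pow_card_pow, mul_smul_comm]

variable [hp : Fact p.Prime] [CharP R p]

theorem IsLinearized.pow_char {Q : R[X]} (hQ : IsLinearized p Q) : IsLinearized p (Q ^ p) := by
  intro n hn
  rw [← map_frobenius_expand, coeff_map, coeff_expand hp.out.pos] at hn
  split_ifs at hn with hdvd
  · obtain ⟨j, hj⟩ := hQ (n / p) fun h => hn (by rw [h, map_zero])
    exact ⟨j + 1, by rw [pow_succ, ← hj, Nat.div_mul_cancel hdvd]⟩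
  · exact absurd (map_zero _) hn

theorem IsLinearized.comp_X_add_C {Q : R[X]} (hQ : IsLinearized p Q) (u : R) :
    Q.comp (X + C u) = Q + C (Q.eval u) := by
  have hterm : ∀ n ∈ Q.support,
      C (Q.coeff n) * (X + C u) ^ n = C (Q.coeff n) * X ^ n + C (Q.coeff n * u ^ n) := by
    intro n hn
    obtain ⟨j, rfl⟩ := hQ n (mem_support_iff.mp hn)
    rw [add_pow_char_pow, mul_add, ← C_pow, ← Polynomial.C_mul]
  rw [comp_eq_sum_left, sum_def, Finset.sum_congr rfl hterm, Finset.sum_add_distrib,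
    ← Q.as_sum_support_C_mul_X_pow, eval_eq_sum, sum_def, map_sum]

theorem IsLinearized.prod_comp_X_add_C_smul [Algebra (ZMod p) R] {Q : R[X]}
    (hQ : IsLinearized p Q) (u : R) :
    ∏ a : ZMod p, Q.comp (X + C (a • u)) = Q ^ p - C (Q.eval u ^ (p - 1)) * Q := by
  simp only [hQ.comp_X_add_C, hQ.eval_smul]
  simp only [← smul_C]
  rw [FiniteField.prod_add_smul, ZMod.card, C_pow]

theorem isLinearized_prod_X_add_C_sum_smul [Algebra (ZMod p) R] {r : ℕ} (v : Fin r → R) :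
    IsLinearized p (∏ c : Fin r → ZMod p, (X + C (∑ i, c i • v i))) := by
  induction r with
  | zero => simpa using isLinearized_X
  | succ r ih =>
    set Q := ∏ c : Fin r → ZMod p, (X + C (∑ i, c i • v i.succ))
    have hQ : IsLinearized p Q := ih _
    have hsplit : ∏ c : Fin (r + 1) → ZMod p, (X + C (∑ i, c i • v i)) =
        ∏ a : ZMod p, Q.comp (X + C (a • v 0)) := by
      rw [← (Fin.consEquiv fun _ => ZMod p).prod_comp, Fintype.prod_prod_type]
      refine Finset.prod_congr rfl fun a _ => ?_
      rw [prod_comp]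
      refine Finset.prod_congr rfl fun c _ => ?_
      simp only [Fin.consEquiv, Equiv.coe_fn_mk, Fin.sum_univ_succ, Fin.cons_zero, Fin.cons_succ,
        map_add, add_comp, X_comp, C_comp]
      ring
    rw [hsplit, hQ.prod_comp_X_add_C_smul]
    exact hQ.pow_char.sub (hQ.C_mul _)

end IsLinearized

end Polynomial

theorem Nat.eq_zero_or_exists_eq_pow_sub_pow {p r i j : ℕ} (hp : 1 < p) (h : p ^ r - i = p ^ j) :
    i = 0 ∨ ∃ k, 1 ≤ k ∧ k ≤ r ∧ i = p ^ r - p ^ (r - k) := by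
  have hpos : 0 < p ^ j := Nat.pow_pos (by omega)
  have hjr : j ≤ r := (Nat.pow_le_pow_iff_right hp).mp (by omega)
  rcases hjr.eq_or_lt with rfl | hlt
  · exact Or.inl (by omega)
  · right
    exact ⟨r - j, by omega, by omega, by rw [Nat.sub_sub_self hjr]; omega⟩

open MvPolynomial

section LinearSubstitution

open scoped Matrix

variable {K n : Type*} [CommRing K] [Fintype n]

theorem aeval_sum_C_mul_X_eq_vecMul (M : Matrix n n K) (c : n → K) :
    aeval (fun i => ∑ j, C (M i j) * X j) (∑ i, C (c i) * X i : MvPolynomial n K) =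
      ∑ j, C ((c ᵥ* M) j) * X j := by
  simp only [map_sum, map_mul, aeval_C, aeval_X, algebraMap_eq, Finset.mul_sum]
  rw [Finset.sum_comm]
  simp only [Matrix.vecMul, dotProduct, map_sum, Finset.sum_mul, C_mul, mul_assoc]

theorem map_prod_X_add_C_sum_C_mul_X [Fintype K] [DecidableEq n] {M : Matrix n n K}
    (hM : IsUnit M) :
    (∏ c : n → K, (Polynomial.X + Polynomial.C (∑ i, C (c i) * X i))).map
        (aeval fun i => ∑ j, C (M i j) * X j : MvPolynomial n K →ₐ[K] MvPolynomial n K) =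
      ∏ c : n → K, (Polynomial.X + Polynomial.C (∑ i, C (c i) * X i)) := by
  simp only [Polynomial.map_prod, Polynomial.map_add, Polynomial.map_X, Polynomial.map_C,
    RingHom.coe_coe, aeval_sum_C_mul_X_eq_vecMul]
  have hsurj := Matrix.vecMul_surjective_iff_isUnit.mpr hM
  exact Fintype.prod_bijective _ ⟨Finite.injective_iff_surjective.mpr hsurj, hsurj⟩ _ _
    fun _ => rfl

end LinearSubstitution

/-- Let `V` be the `r`-dimensional `𝔽_p`-vector space spanned by
the variables inside `𝔽_p[x₁,…,x_r]`.  The `i`-th elementary symmetric polynomial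
`e i` of the `p^r` elements of `V` (the coefficient of `X^(p^r - i)` in
`∏_{w ∈ V} (X + w)`) is invariant under the `GL_r(𝔽_p)`-action by linear
substitution of the variables, and `e i = 0` unless `i = 0` or
`i = p^r − p^(r−j)` for some `1 ≤ j ≤ r`. -/
theorem stmt11 (p : ℕ) [hp : Fact p.Prime] (r : ℕ)
    (P : Polynomial (MvPolynomial (Fin r) (ZMod p)))
    (hP : P = ∏ c : Fin r → ZMod p,
      (Polynomial.X + Polynomial.C (∑ i, MvPolynomial.C (c i) * MvPolynomial.X i)))
    (e : ℕ → MvPolynomial (Fin r) (ZMod p))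
    (he : ∀ i, e i = P.coeff (p ^ r - i)) :
    (∀ i : ℕ, ∀ g : Matrix.GeneralLinearGroup (Fin r) (ZMod p),
      MvPolynomial.aeval
        (fun i : Fin r => ∑ j, MvPolynomial.C ((g : Matrix (Fin r) (Fin r) (ZMod p)) i j)
          * MvPolynomial.X j) (e i) = e i) ∧
    (∀ i : ℕ, i ≤ p ^ r → e i ≠ 0 →
      i = 0 ∨ ∃ j : ℕ, 1 ≤ j ∧ j ≤ r ∧ i = p ^ r - p ^ (r - j)) := by
  refine ⟨fun i g => ?_, fun i _ hi => ?_⟩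
  · rw [he, ← RingHom.coe_coe, ← Polynomial.coeff_map, hP,
      map_prod_X_add_C_sum_C_mul_X (Units.isUnit g)]
  · have hlin : Polynomial.IsLinearized p P := by
      simpa only [hP, C_mul'] using
        Polynomial.isLinearized_prod_X_add_C_sum_smul (R := MvPolynomial (Fin r) (ZMod p)) X
    obtain ⟨j, hj⟩ := hlin _ (he i ▸ hi)
    exact Nat.eq_zero_or_exists_eq_pow_sub_pow hp.out.one_lt hj
end

section
/- Let G be a finite group, k a field of characteristic p, and suppose ζ_1,…,ζ_r ∈ H*(G,k) is a homogeneous system of parameters satisfying the rank-restriction condition (ζ_i restricts to zero on every elementary abelian p-subgroup of rank less than i). Then for every elementary abelian p-subgroup E of rank i, the restrictions of ζ_1,…,ζ_i to H*(E,k) form a homogeneous system of parameters for H*(E,k), and ζ_{i+1},…,ζ_r restrict to zero. -/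
/-!
Every `ζⱼ` with `j ≥ rk E` restricts to zero on `E` by the rank-restriction condition, so the
restrictions of `ζ₁,…,ζᵢ` generate the image under restriction of `k[ζ₁,…,ζ_r]`. Since `H*(G,k)`
is module-finite over `k[ζ₁,…,ζ_r]` and `H*(E,k)` is module-finite over the image of restriction,
`H*(E,k)` is module-finite over that image subalgebra.
-/

/-- A subgroup is elementary abelian for the prime `p`: abelian of exponent
dividing `p`. -/
def IsElementaryAbelian (p : ℕ) {G : Type} [Group G] (E : Subgroup G) : Prop :=
  (∀ x ∈ E, x ^ p = 1) ∧ ∀ x ∈ E, ∀ y ∈ E, x * y = y * x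

theorem Subalgebra.finite_map {k B C : Type*} [CommRing k] [CommRing B] [CommRing C]
    [Algebra k B] [Algebra k C] (f : B →ₐ[k] C) (S : Subalgebra k B) [Module.Finite S B]
    [Module.Finite f.range C] : Module.Finite (S.map f) C := by
  have hf : (f : B →+* C).Finite :=
    (RingHom.finite_algebraMap (A := f.range)).mpr ‹_› |>.comp
      (.of_surjective _ f.rangeRestrict_surjective)
  -- this composite is `f` restricted to `S`, i.e. `hf` composed with the finite `S → B`
  have hfS : ((algebraMap (S.map f) C).comp (f.subalgebraMap S : S →+* S.map f)).Finite :=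
    hf.comp ((RingHom.finite_algebraMap (A := S)).mpr ‹_›)
  exact RingHom.finite_algebraMap.mp hfS.of_comp_finite

theorem Algebra.adjoin_image_eq_adjoin_range {k A ι : Type*} [CommSemiring k] [Semiring A]
    [Algebra k A] (u : ι → A) (s : Set ι) (hu : ∀ j ∉ s, u j = 0) :
    Algebra.adjoin k (u '' s) = Algebra.adjoin k (Set.range u) := by
  refine le_antisymm (Algebra.adjoin_mono (Set.image_subset_range u s)) ?_
  rw [Algebra.adjoin_le_iff]
  rintro _ ⟨j, rfl⟩
  by_cases hj : j ∈ s
  · exact Algebra.subset_adjoin ⟨j, hj, rfl⟩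
  · rw [hu j hj]
    exact Subalgebra.zero_mem _

theorem stmt14_general
    (p : ℕ) {G : Type} [Group G]
    (k : Type) [Field k]
    -- `H*(G,k)`, a finitely generated graded `k`-algebra:
    (HG : Type) [CommRing HG] [Algebra k HG]
    -- `H*(E,k)` for subgroups `E`, with restriction maps:
    (HE : Subgroup G → Type) [∀ E, CommRing (HE E)] [∀ E, Algebra k (HE E)]
    (res : ∀ E : Subgroup G, HG →ₐ[k] HE E)
    -- Evens: `H*(E,k)` is module-finite over the image of restriction:
    (hEvens : ∀ E : Subgroup G, IsElementaryAbelian p E →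
      Module.Finite ↥(res E).range (HE E))
    -- the rank of an elementary abelian subgroup, = Krull dimension of `H*(E,k)`:
    (rk : Subgroup G → ℕ)
    -- `ζ₁,…,ζ_r` is a homogeneous system of parameters for `H*(G,k)`:
    (r : ℕ) (ζ : Fin r → HG)
    (hsop : Module.Finite ↥(Algebra.adjoin k (Set.range ζ)) HG)
    -- the rank-restriction condition:
    (hrr : ∀ i : Fin r, ∀ E : Subgroup G, IsElementaryAbelian p E →
      rk E < (i : ℕ) + 1 → res E (ζ i) = 0) :
    ∀ E : Subgroup G, IsElementaryAbelian p E →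
      -- `ζ_{i+1},…,ζ_r` restrict to zero on `E` (of rank `i = rk E`) …
      (∀ j : Fin r, rk E ≤ (j : ℕ) → res E (ζ j) = 0) ∧
      -- … and the restrictions of `ζ₁,…,ζᵢ` form a homogeneous system of
      -- parameters for `H*(E,k)`:
      Module.Finite
        ↥(Algebra.adjoin k ((fun j => res E (ζ j)) '' {j : Fin r | (j : ℕ) < rk E}))
        (HE E) := by
  intro E hE
  have hzero : ∀ j : Fin r, rk E ≤ (j : ℕ) → res E (ζ j) = 0 :=
    fun j hj => hrr j E hE (Nat.lt_succ_of_le hj)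
  refine ⟨hzero, ?_⟩
  have := hEvens E hE
  rw [Algebra.adjoin_image_eq_adjoin_range _ {j : Fin r | (j : ℕ) < rk E}
    fun j hj => hzero j (not_lt.mp hj), Set.range_comp', Algebra.adjoin_image]
  exact Subalgebra.finite_map (res E) _

/-- Let `G` be a finite group and `k` a field of characteristic
`p`, and suppose `ζ₁,…,ζ_r ∈ H*(G,k)` is a homogeneous system of parameters
satisfying the rank-restriction condition (`ζᵢ` restricts to zero on every
elementary abelian `p`-subgroup of rank `< i`).  Then for every elementary
abelian `p`-subgroup `E` of rank `i`, the restrictions of `ζ₁,…,ζᵢ` to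
`H*(E,k)` form a homogeneous system of parameters for `H*(E,k)` (i.e. `H*(E,k)`,
of Krull dimension `i`, is module-finite over the subalgebra they generate),
and `ζ_{i+1},…,ζ_r` restrict to zero.  The cohomology rings (finitely generated
graded-commutative `k`-algebras, by Evens' theorem) are supplied as abstract
data, `H*(E,k)` being module-finite over the image of restriction. -/
theorem stmt14
    (p : ℕ) [Fact p.Prime] {G : Type} [Group G] [Finite G]
    (k : Type) [Field k] (hchar : CharP k p)
    -- `H*(G,k)`, a finitely generated graded `k`-algebra:
    (HG : Type) [CommRing HG] [Algebra k HG] (hfg : Algebra.FiniteType k HG)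
    (𝒜 : ℤ → Submodule k HG) [GradedAlgebra 𝒜]
    -- `H*(E,k)` for subgroups `E`, with restriction maps:
    (HE : Subgroup G → Type) [∀ E, CommRing (HE E)] [∀ E, Algebra k (HE E)]
    (res : ∀ E : Subgroup G, HG →ₐ[k] HE E)
    -- Evens: `H*(E,k)` is module-finite over the image of restriction:
    (hEvens : ∀ E : Subgroup G, IsElementaryAbelian p E →
      Module.Finite ↥(res E).range (HE E))
    -- the rank of an elementary abelian subgroup, = Krull dimension of `H*(E,k)`:
    (rk : Subgroup G → ℕ)
    (hrkdim : ∀ E : Subgroup G, IsElementaryAbelian p E →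
      ringKrullDim (HE E) = (rk E : WithBot (WithTop ℕ)))
    -- `ζ₁,…,ζ_r` is a homogeneous system of parameters for `H*(G,k)`:
    (r : ℕ) (ζ : Fin r → HG) (n : Fin r → ℤ)
    (hζhom : ∀ i, ζ i ∈ 𝒜 (n i)) (hζpos : ∀ i, 0 < n i)
    (hsop : Module.Finite ↥(Algebra.adjoin k (Set.range ζ)) HG)
    (hdim : ringKrullDim HG = (r : WithBot (WithTop ℕ)))
    -- the rank-restriction condition:
    (hrr : ∀ i : Fin r, ∀ E : Subgroup G, IsElementaryAbelian p E →
      rk E < (i : ℕ) + 1 → res E (ζ i) = 0) :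
    ∀ E : Subgroup G, IsElementaryAbelian p E →
      -- `ζ_{i+1},…,ζ_r` restrict to zero on `E` (of rank `i = rk E`) …
      (∀ j : Fin r, rk E ≤ (j : ℕ) → res E (ζ j) = 0) ∧
      -- … and the restrictions of `ζ₁,…,ζᵢ` form a homogeneous system of
      -- parameters for `H*(E,k)`:
      Module.Finite
        ↥(Algebra.adjoin k ((fun j => res E (ζ j)) '' {j : Fin r | (j : ℕ) < rk E}))
        (HE E) :=
  stmt14_general p k HG HE res hEvens rk r ζ hsop hrr
end

section
/- Let G be a finite group of p-rank r ≥ 2 and k a field of characteristic p, and let ζ_1,…,ζ_r be a homogeneous system of parameters for H*(G,k) with |ζ_i| = n_i. Then the tensor product L_{ζ_1} ⊗ ⋯ ⊗ L_{ζ_r} of the Carlson modules is a projective kG-module, and L_{ζ_1} ⊗ ⋯ ⊗ L_{ζ_{r−1}} is a periodic kG-module. -/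
/-!
A homogeneous element `x` of positive degree is integral over `k[ζ]`; reducing a monic equation
of `x` modulo `(ζ)` gives one with coefficients in `k`, and its top homogeneous component shows
`x ^ m ∈ (ζ)`. Hence `V(ζ₁, …, ζ_r)` is the origin. Modulo `ζ₁, …, ζ_{r-1}` the ring `H` is
integral over `k[ζ_r]`, so its Krull dimension is at most `1`. Varieties of tensor products are
intersections, which turns both facts into the claims about the Carlson modules.
-/

open Polynomial

theorem ringKrullDim_le_of_isIntegral (R S : Type*) [CommRing R] [CommRing S] [Algebra R S]
    [Algebra.IsIntegral R S] : ringKrullDim S ≤ ringKrullDim R :=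
  Order.krullDim_le_of_strictMono
    (fun P : PrimeSpectrum S => ⟨P.asIdeal.comap (algebraMap R S), inferInstance⟩)
    fun _ _ h => Ideal.IsIntegral.comap_lt_comap (R := R) h

theorem ringKrullDim_quotient_le_of_le_radical {R : Type*} [CommRing R] {I J : Ideal R}
    (h : I ≤ J.radical) : ringKrullDim (R ⧸ J) ≤ ringKrullDim (R ⧸ I) := by
  rw [ringKrullDim_quotient, ringKrullDim_quotient, ← PrimeSpectrum.zeroLocus_radical J]
  exact Order.krullDim_le_of_strictMono
    (Set.inclusion (PrimeSpectrum.zeroLocus_anti_mono_ideal h)) fun _ _ h => h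

theorem ringKrullDim_adjoin_range_le {k A ι : Type*} [Field k] [CommRing A] [Algebra k A]
    [Finite ι] (x : ι → A) : ringKrullDim (Algebra.adjoin k (Set.range x)) ≤ Nat.card ι := by
  rw [Algebra.adjoin_range_eq_range_aeval]
  calc ringKrullDim (MvPolynomial.aeval (R := k) x).range
      ≤ ringKrullDim (MvPolynomial ι k) :=
        ringKrullDim_le_of_surjective _ (MvPolynomial.aeval x).rangeRestrict_surjective
    _ = Nat.card ι := by
      rw [MvPolynomial.ringKrullDim_of_isNoetherianRing, ringKrullDim_eq_zero_of_field, zero_add]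

section Parameters

variable {k H : Type*} [Field k] [CommRing H] [Algebra k H]

theorem Ideal.Quotient.mk_mem_bot_of_mem_adjoin {s : Set H} {a : H}
    (ha : a ∈ Algebra.adjoin k s) :
    Ideal.Quotient.mk (Ideal.span s) a ∈ (⊥ : Subalgebra k (H ⧸ Ideal.span s)) := by
  refine Algebra.adjoin_le (S := (⊥ : Subalgebra k _).comap (Ideal.Quotient.mkₐ k _)) ?_ ha
  intro y hy
  show Ideal.Quotient.mk (Ideal.span s) y ∈ (⊥ : Subalgebra k _)
  rw [Ideal.Quotient.eq_zero_iff_mem.2 (Ideal.subset_span hy)]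
  exact zero_mem _

theorem exists_monic_aeval_mem_span {s : Set H} {x : H}
    (hx : IsIntegral (Algebra.adjoin k s) x) : ∃ q : k[X], q.Monic ∧ aeval x q ∈ Ideal.span s := by
  set I := Ideal.span s
  rcases subsingleton_or_nontrivial (H ⧸ I) with h | h
  · exact ⟨1, monic_one, Ideal.Quotient.eq_zero_iff_mem.1 (Subsingleton.elim _ _)⟩
  obtain ⟨P, hPm, hP⟩ := hx
  let f : Algebra.adjoin k s →+* H ⧸ I := (Ideal.Quotient.mk I).comp (algebraMap _ H)
  have hlifts : P.map f ∈ lifts (algebraMap k (H ⧸ I)) := by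
    refine lifts_iff_coeff_lifts _ |>.2 fun j => ?_
    rw [coeff_map]
    exact Algebra.mem_bot.1 (Ideal.Quotient.mk_mem_bot_of_mem_adjoin (P.coeff j).2)
  obtain ⟨q, hq, -, hqm⟩ := lifts_and_degree_eq_and_monic hlifts (hPm.map f)
  refine ⟨q, hqm, Ideal.Quotient.eq_zero_iff_mem.1 ?_⟩
  rw [← Ideal.Quotient.mkₐ_eq_mk k, ← aeval_algHom_apply, aeval_def, ← eval_map, hq, eval_map,
    Ideal.Quotient.mkₐ_eq_mk, show f = (Ideal.Quotient.mk I).comp (algebraMap _ H) from rfl,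
    ← hom_eval₂, hP, map_zero]

variable (𝒜 : ℤ → Submodule k H) [GradedAlgebra 𝒜]

theorem Ideal.IsHomogeneous.pow_natDegree_mem_of_aeval_mem {I : Ideal H}
    (hI : I.IsHomogeneous 𝒜) {d : ℤ} (hd : d ≠ 0) {x : H} (hx : x ∈ 𝒜 d) {q : k[X]}
    (hq : q.Monic) (hqx : aeval x q ∈ I) : x ^ q.natDegree ∈ I := by
  have hmem : ∀ j, q.coeff j • x ^ j ∈ 𝒜 (j • d) := fun j =>
    Submodule.smul_mem _ _ (SetLike.pow_mem_graded j hx)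
  have hproj : GradedRing.proj 𝒜 (q.natDegree • d) (aeval x q) = x ^ q.natDegree := by
    rw [aeval_eq_sum_range, map_sum, Finset.sum_eq_single_of_mem q.natDegree
      (Finset.self_mem_range_succ _), GradedRing.proj_apply,
      DirectSum.decompose_of_mem_same 𝒜 (hmem _), hq.coeff_natDegree, one_smul]
    intro j _ hj
    rw [GradedRing.proj_apply, DirectSum.decompose_of_mem_ne 𝒜 (hmem j)]
    exact fun h => hj (by exact_mod_cast smul_left_injective ℤ hd h)
  exact hproj ▸ hI _ hqx

theorem mem_radical_span_of_mem_graded {s : Set H} (hs : ∀ y ∈ s, SetLike.IsHomogeneousElem 𝒜 y)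
    [Algebra.IsIntegral (Algebra.adjoin k s) H] {d : ℤ} (hd : d ≠ 0) {x : H} (hx : x ∈ 𝒜 d) :
    x ∈ (Ideal.span s).radical := by
  obtain ⟨q, hq, hqx⟩ :=
    exists_monic_aeval_mem_span (Algebra.IsIntegral.isIntegral (R := Algebra.adjoin k s) x)
  exact ⟨_, (Ideal.homogeneous_span 𝒜 s hs).pow_natDegree_mem_of_aeval_mem 𝒜 hd hx hq hqx⟩

end Parameters

theorem ringKrullDim_quotient_span_image_le (k : Type*) {H ι : Type*} [Field k] [CommRing H]
    [Algebra k H] [Finite ι] (ζ : ι → H) [Algebra.IsIntegral (Algebra.adjoin k (Set.range ζ)) H]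
    (S : Set ι) : ringKrullDim (H ⧸ Ideal.span (ζ '' S)) ≤ Nat.card ↥Sᶜ := by
  set φ := Ideal.Quotient.mk (Ideal.span (ζ '' S))
  set B := Algebra.adjoin k (Set.range fun i : ↥Sᶜ => φ (ζ i))
  have hφ : ∀ a ∈ Algebra.adjoin k (Set.range ζ), φ a ∈ B := by
    refine fun a ha => Algebra.adjoin_le (S := B.comap (Ideal.Quotient.mkₐ k _)) ?_ ha
    rintro _ ⟨i, rfl⟩
    by_cases hi : i ∈ S
    · show φ (ζ i) ∈ B
      rw [Ideal.Quotient.eq_zero_iff_mem.2 (Ideal.subset_span (Set.mem_image_of_mem ζ hi))]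
      exact B.zero_mem
    · exact Algebra.subset_adjoin ⟨⟨i, hi⟩, rfl⟩
  have : Algebra.IsIntegral B (H ⧸ Ideal.span (ζ '' S)) := by
    refine ⟨fun y => ?_⟩
    obtain ⟨h, rfl⟩ := Ideal.Quotient.mk_surjective y
    exact IsIntegral.map_of_comp_eq
      ((φ.comp (algebraMap (Algebra.adjoin k (Set.range ζ)) H)).codRestrict B fun a => hφ a a.2)
      φ rfl (Algebra.IsIntegral.isIntegral h)
  exact (ringKrullDim_le_of_isIntegral B _).trans (ringKrullDim_adjoin_range_le _)

theorem Fin.subsingleton_compl_setOf_lt_sub_one (r : ℕ) :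
    Subsingleton ↥{i : Fin r | (i : ℕ) < r - 1}ᶜ := by
  refine ⟨fun a b => Subtype.ext (Fin.ext ?_)⟩
  have ha := a.2
  have hb := b.2
  simp only [Set.mem_compl_iff, Set.mem_ofPred_eq, not_lt] at ha hb
  omega

theorem radical_le_radical_foldr {Md R : Type*} [CommSemiring R] {tensor : Md → Md → Md}
    {one : Md} {J : Md → Ideal R} (hJ : ∀ M N, (J (tensor M N)).radical = (J M ⊔ J N).radical)
    {l : List Md} {M : Md} (hM : M ∈ l) : (J M).radical ≤ (J (l.foldr tensor one)).radical := by
  induction l with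
  | nil => cases hM
  | cons N l ih =>
    rw [List.foldr_cons, hJ]
    rcases List.mem_cons.1 hM with rfl | hM
    · exact Ideal.radical_mono le_sup_left
    · exact (ih hM).trans (Ideal.radical_mono le_sup_right)

theorem stmt16_general
    (k : Type) [Field k]
    -- `H = H*(G,k)`, a graded `k`-algebra; the `p`-rank `r = dim H ≥ 2`:
    (H : Type) [CommRing H] [Algebra k H]
    (𝒜 : ℤ → Submodule k H) [GradedAlgebra 𝒜]
    (r : ℕ)
    -- finitely generated `kG`-modules with tensor product and trivial module:
    (Md : Type) (tensor : Md → Md → Md) (one : Md)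
    -- support varieties, given by defining ideals `J M ⊴ H` (`V_G(M) = V(J M)`):
    (J : Md → Ideal H)
    (hJtensor : ∀ M N : Md, (J (tensor M N)).radical = (J M ⊔ J N).radical)
    -- the irrelevant maximal ideal, i.e. the origin of `V_G`:
    (𝔪 : Ideal H)
    (h𝔪' : 𝔪 = Ideal.span (⋃ n : {n : ℤ // 0 < n}, ((𝒜 n.1 : Submodule k H) : Set H)))
    -- a module is projective iff its variety is `{0}`:
    (IsProj IsPeriodic : Md → Prop)
    (hproj : ∀ M : Md, IsProj M ↔ 𝔪 ≤ (J M).radical)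
    -- a module is periodic iff its variety is at most one-dimensional:
    (hper : ∀ M : Md, IsPeriodic M ↔ ringKrullDim (H ⧸ J M) ≤ (1 : WithBot (WithTop ℕ)))
    -- `ζ₁,…,ζ_r` is a homogeneous system of parameters for `H`:
    (ζ : Fin r → H) (n : Fin r → ℤ)
    (hζhom : ∀ i, ζ i ∈ 𝒜 (n i))
    (hsop : Module.Finite ↥(Algebra.adjoin k (Set.range ζ)) H)
    -- the Carlson modules `L_{ζᵢ}`, with `V_G(L_ζ) = V⟨ζ⟩`:
    (L : Fin r → Md)
    (hL : ∀ i, (J (L i)).radical = (Ideal.span {ζ i}).radical) :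
    IsProj ((List.ofFn L).foldr tensor one) ∧
    IsPeriodic (((List.ofFn L).take (r - 1)).foldr tensor one) := by
  have hζ : ∀ {l : List Md} {i : Fin r}, L i ∈ l → ζ i ∈ (J (l.foldr tensor one)).radical :=
    fun hi => radical_le_radical_foldr hJtensor hi
      (hL _ ▸ Ideal.le_radical (Ideal.mem_span_singleton_self _))
  have : Algebra.IsIntegral (Algebra.adjoin k (Set.range ζ)) H := Algebra.IsIntegral.of_finite _ _
  constructor
  · rw [hproj, h𝔪', Ideal.span_le]
    intro x hx
    obtain ⟨⟨d, hd⟩, hx⟩ := Set.mem_iUnion.1 hx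
    refine Ideal.radical_le_radical_iff.2 ?_
      (mem_radical_span_of_mem_graded 𝒜 (s := Set.range ζ)
        (by rintro _ ⟨i, rfl⟩; exact ⟨n i, hζhom i⟩) hd.ne' hx)
    rw [Ideal.span_le]
    rintro _ ⟨i, rfl⟩
    exact hζ (List.mem_ofFn.2 ⟨i, rfl⟩)
  · rw [hper]
    have hspan : Ideal.span (ζ '' {i | (i : ℕ) < r - 1}) ≤
        (J (((List.ofFn L).take (r - 1)).foldr tensor one)).radical := by
      rw [Ideal.span_le]
      rintro _ ⟨i, hi : (i : ℕ) < r - 1, rfl⟩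
      exact hζ (List.mem_take_iff_getElem.2 ⟨i, by rw [List.length_ofFn]; omega, by simp⟩)
    have := Fin.subsingleton_compl_setOf_lt_sub_one r
    calc _ ≤ _ := ringKrullDim_quotient_le_of_le_radical hspan
      _ ≤ _ := ringKrullDim_quotient_span_image_le k ζ _
      _ ≤ 1 := Nat.cast_le_one.2 (Finite.card_le_one_iff_subsingleton.2 this)

/-- Let `G` be a finite group of `p`-rank `r ≥ 2`, `k` a field
of characteristic `p`, and `ζ₁,…,ζ_r` a homogeneous system of parameters for
`H*(G,k)`.  Then the tensor product `L_{ζ₁} ⊗ ⋯ ⊗ L_{ζ_r}` of the Carlson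
modules is projective, and `L_{ζ₁} ⊗ ⋯ ⊗ L_{ζ_{r−1}}` is periodic.  The theory
of support varieties is supplied as abstract data: `V_G(M)` is the zero locus of
an ideal `J M` of `H = H*(G,k)`; tensor products intersect varieties; a module
is projective iff its variety is the origin `{𝔪}`; a module is periodic iff its
variety is at most one-dimensional; and `V_G(L_ζ)` is the hypersurface `V⟨ζ⟩`. -/
theorem stmt16
    (p : ℕ) [Fact p.Prime] {G : Type} [Group G] [Finite G]
    (k : Type) [Field k] (hchar : CharP k p)
    -- `H = H*(G,k)`, a graded `k`-algebra; the `p`-rank `r = dim H ≥ 2`: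
    (H : Type) [CommRing H] [Algebra k H]
    (𝒜 : ℤ → Submodule k H) [GradedAlgebra 𝒜]
    (r : ℕ) (hr : 2 ≤ r)
    (hdim : ringKrullDim H = (r : WithBot (WithTop ℕ)))
    -- finitely generated `kG`-modules with tensor product and trivial module:
    (Md : Type) (tensor : Md → Md → Md) (one : Md)
    (hone : ∀ M, tensor one M = M)
    -- support varieties, given by defining ideals `J M ⊴ H` (`V_G(M) = V(J M)`):
    (J : Md → Ideal H)
    (hJtensor : ∀ M N : Md, (J (tensor M N)).radical = (J M ⊔ J N).radical)
    -- the irrelevant maximal ideal, i.e. the origin of `V_G`: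
    (𝔪 : Ideal H) (h𝔪 : 𝔪.IsMaximal)
    (h𝔪' : 𝔪 = Ideal.span (⋃ n : {n : ℤ // 0 < n}, ((𝒜 n.1 : Submodule k H) : Set H)))
    -- a module is projective iff its variety is `{0}`:
    (IsProj IsPeriodic : Md → Prop)
    (hproj : ∀ M : Md, IsProj M ↔ 𝔪 ≤ (J M).radical)
    -- a module is periodic iff its variety is at most one-dimensional:
    (hper : ∀ M : Md, IsPeriodic M ↔ ringKrullDim (H ⧸ J M) ≤ (1 : WithBot (WithTop ℕ)))
    -- `ζ₁,…,ζ_r` is a homogeneous system of parameters for `H`: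
    (ζ : Fin r → H) (n : Fin r → ℤ)
    (hζhom : ∀ i, ζ i ∈ 𝒜 (n i)) (hζpos : ∀ i, 0 < n i)
    (hsop : Module.Finite ↥(Algebra.adjoin k (Set.range ζ)) H)
    -- the Carlson modules `L_{ζᵢ}`, with `V_G(L_ζ) = V⟨ζ⟩`:
    (L : Fin r → Md)
    (hL : ∀ i, (J (L i)).radical = (Ideal.span {ζ i}).radical) :
    IsProj ((List.ofFn L).foldr tensor one) ∧
    IsPeriodic (((List.ofFn L).take (r - 1)).foldr tensor one) :=
  stmt16_general k H 𝒜 r Md tensor one J hJtensor 𝔪 h𝔪' IsProj IsPeriodic hproj hper ζ n hζhom hsop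
    L hL
end
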